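/- arXiv:2508.14874 — 4 statements merged into one kernel-verified Lean document; each statement's English description precedes it below -/
import Mathlib

section
/- For all real x ≥ 0 and all integers k ≥ 2, one has sinh(x/(2k))^2 ≤ (1/k)·sinh(x/2). -/
lemma aux_sinh (t : ℝ) (ht : 0 ≤ t) : ∀ k : ℕ, 2 ≤ k →
    (k : ℝ) * (Real.sinh t * Real.cosh t) ≤ Real.sinh (k * t) := by
  intro k hk
  induction k, hk using Nat.le_induction with
  | base =>
    rw [show ((2:ℕ):ℝ) * t = 2 * t by push_cast; ring, Real.sinh_two_mul]
    push_cast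
    linarith
  | succ k hk ih =>
    have h1 : Real.sinh (((k:ℝ)+1) * t) =
        Real.sinh ((k:ℝ)*t) * Real.cosh t + Real.cosh ((k:ℝ)*t) * Real.sinh t := by
      rw [show ((k:ℝ)+1) * t = (k:ℝ)*t + t by ring, Real.sinh_add]
    have hc1 : 1 ≤ Real.cosh t := Real.one_le_cosh t
    have hc2 : Real.cosh t ≤ Real.cosh ((k:ℝ)*t) := by
      rw [Real.cosh_le_cosh]
      have : (1:ℝ) ≤ (k:ℝ) := by exact_mod_cast Nat.one_le_of_lt hk
      rw [abs_of_nonneg ht, abs_of_nonneg (by positivity)]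
      nlinarith
    have hs : 0 ≤ Real.sinh t := Real.sinh_nonneg_iff.mpr ht
    have hct : 0 ≤ Real.cosh t := (Real.cosh_pos t).le
    have h2 := mul_le_mul_of_nonneg_right ih hct
    have h3 := mul_le_mul_of_nonneg_right hc2 hs
    push_cast
    nlinarith [mul_nonneg hs hct, mul_le_mul_of_nonneg_right hc1 (mul_nonneg (mul_nonneg (Nat.cast_nonneg k : (0:ℝ) ≤ k) hs) hct)]

/-- For all real `x ≥ 0` and all integers `k ≥ 2`,
`sinh(x/(2k))^2 ≤ (1/k)·sinh(x/2)`. -/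
theorem sinh_sq_le (x : ℝ) (hx : 0 ≤ x) (k : ℕ) (hk : 2 ≤ k) :
    Real.sinh (x / (2 * k)) ^ 2 ≤ (1 / k) * Real.sinh (x / 2) := by
  have hk0 : (0:ℝ) < k := by positivity
  set t := x / (2 * k) with ht_def
  have ht : 0 ≤ t := by positivity
  have hkt : (k:ℝ) * t = x / 2 := by
    rw [ht_def]; field_simp
  have hmain := aux_sinh t ht k hk
  rw [hkt] at hmain
  have hs : 0 ≤ Real.sinh t := Real.sinh_nonneg_iff.mpr ht
  have hsc : Real.sinh t ≤ Real.cosh t := (Real.sinh_lt_cosh t).le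
  rw [div_mul_eq_mul_div, le_div_iff₀ hk0, one_mul]
  nlinarith [mul_le_mul_of_nonneg_left hsc hs, mul_le_mul_of_nonneg_right (mul_le_mul_of_nonneg_left hsc hs) hk0.le]
end

section
/- For all real x ≥ 0 and all integers k ≥ 2, one has cosh(x/k) − (2/k)·sinh(x/2) ≤ 1. -/
/-!
Put `a = x / (2k)`. Then `cosh (x / k) = 1 + 2 sinh² a` and `sinh (x / 2) = sinh (k a)`, so the
claim is `k sinh² a ≤ sinh (k a)`. Splitting `k a = (k - 1) a + a` with the addition formula,
`sinh ((k - 1) a) cosh a ≥ (k - 1) sinh a · sinh a` by superadditivity of `sinh` on `[0, ∞)`, and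
`cosh ((k - 1) a) sinh a ≥ sinh a · sinh a` because `k - 1 ≥ 1`.
-/

namespace Real

theorem sinh_add_sinh_le_sinh_add {a b : ℝ} (ha : 0 ≤ a) (hb : 0 ≤ b) :
    sinh a + sinh b ≤ sinh (a + b) := by
  rw [sinh_add]
  have hsa : 0 ≤ sinh a := sinh_nonneg_iff.mpr ha
  have hsb : 0 ≤ sinh b := sinh_nonneg_iff.mpr hb
  nlinarith [one_le_cosh a, one_le_cosh b]

theorem nat_mul_sinh_le_sinh_nat_mul (n : ℕ) {a : ℝ} (ha : 0 ≤ a) :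
    n * sinh a ≤ sinh (n * a) := by
  induction n with
  | zero => simp
  | succ n ih =>
    calc ((n + 1 : ℕ) : ℝ) * sinh a = n * sinh a + sinh a := by push_cast; ring
      _ ≤ sinh (n * a) + sinh a := by gcongr
      _ ≤ sinh (n * a + a) := sinh_add_sinh_le_sinh_add (by positivity) ha
      _ = sinh ((n + 1 : ℕ) * a) := by push_cast; ring_nf

theorem nat_mul_sinh_sq_le_sinh_nat_mul {n : ℕ} (hn : 2 ≤ n) {a : ℝ} (ha : 0 ≤ a) :
    n * sinh a ^ 2 ≤ sinh (n * a) := by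
  obtain ⟨m, rfl⟩ : ∃ m, n = m + 1 := ⟨n - 1, by omega⟩
  have hm : (1 : ℝ) ≤ m := by exact_mod_cast (show 1 ≤ m by omega)
  have h_mul : m * sinh a ≤ sinh (m * a) := nat_mul_sinh_le_sinh_nat_mul m ha
  have h_sinh_le_cosh_mul : sinh a ≤ cosh (m * a) :=
    (sinh_le_sinh.mpr (le_mul_of_one_le_left ha hm)).trans (sinh_lt_cosh _).le
  calc ((m + 1 : ℕ) : ℝ) * sinh a ^ 2 = m * sinh a * sinh a + sinh a * sinh a := by
        push_cast; ring
    _ ≤ sinh (m * a) * cosh a + cosh (m * a) * sinh a := by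
        gcongr
        exact (sinh_lt_cosh a).le
    _ = sinh ((m + 1 : ℕ) * a) := by rw [← sinh_add]; push_cast; ring_nf

end Real

/-- For all real `x ≥ 0` and all integers `k ≥ 2`,
`cosh(x/k) − (2/k)·sinh(x/2) ≤ 1`. -/
theorem cosh_sub_sinh_le_one (x : ℝ) (hx : 0 ≤ x) (k : ℕ) (hk : 2 ≤ k) :
    Real.cosh (x / k) - (2 / k) * Real.sinh (x / 2) ≤ 1 := by
  set a := x / (2 * k) with ha
  have h_cosh : Real.cosh (x / k) = 1 + 2 * Real.sinh a ^ 2 := by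
    rw [show x / k = 2 * a by rw [ha]; field_simp, Real.cosh_two_mul, Real.cosh_sq']; ring
  have h_sinh : Real.sinh (x / 2) = Real.sinh (k * a) := by rw [ha]; field_simp
  have key : k * Real.sinh a ^ 2 ≤ Real.sinh (k * a) :=
    Real.nat_mul_sinh_sq_le_sinh_nat_mul hk (by positivity)
  have h_sq : 2 * Real.sinh a ^ 2 ≤ (2 / k) * Real.sinh (k * a) := by
    calc 2 * Real.sinh a ^ 2 = (2 / k) * (k * Real.sinh a ^ 2) := by field_simp
      _ ≤ (2 / k) * Real.sinh (k * a) := by gcongr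
  rw [h_cosh, h_sinh]
  linarith
end

section
/- Let (a_i)_{i≥1} be real numbers with |a_i| ≤ ã_i where ã_i/(i−1)! is nondecreasing in i for i ≥ 1. Suppose A is a real number satisfying |A − ∑_{i=0}^{k} a_i/(g−m)^i| ≤ C_k/(g−m)^{k+1} for positive integers g, m, k with m ≤ k+1 ≤ g^{1/3}. Then |A − ∑_{t=0}^{k} m^t·b_t/g^t| ≤ (3C_k + 3k²·e^m·ã_k)/g^{k+1}, where b_0 = a_0 and b_t = ∑_{i=1}^{t} C(t−1, i−1)·m^{−i}·a_i for t ≥ 1. -/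
/-!
Write `d = g - m`. For `i ≥ 1` one has `1/d^i = ∑_{t ≥ i} C(t-1, i-1) m^(t-i) / g^t`, and the
truncation at `t = k` leaves the exact remainder `(∑_{s<i} C(k,s) m^(k-s) d^s) / (g^k d^i)`: the
head of the binomial expansion of `g^k = (m + d)^k`. Substituting into the expansion in `1/d` and
exchanging the two summations produces the coefficients `b_t`, so the error in `1/g` is the given
error plus `∑ a_i` times these remainders.

Since `k m ≤ (2/3) d`, the terms of each head grow at least geometrically with ratio `3/2`, so the
head is at most three times its last term. The growth condition on `ã` then bounds the `i`-th
contribution by `3 k ã_k m^(k+1-i) / ((k+1-i)! g^k d)`, and the sum over `i` is a partial sum of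
`e^m`. Finally `g ≥ (k+1)^3` gives `(g/d)^(k+1) ≤ e < 3` and `g/d ≤ 4/3`.
-/

open Finset Real
open scoped Nat

theorem sum_range_succ_eq_add_sum_Icc {M : Type*} [AddCommMonoid M] (f : ℕ → M) (k : ℕ) :
    ∑ t ∈ range (k + 1), f t = f 0 + ∑ t ∈ Icc 1 k, f t := by
  rw [range_eq_Ico, sum_eq_sum_Ico_succ_bot (by omega : 0 < k + 1), zero_add,
    Ico_add_one_right_eq_Icc]

theorem Nat.choose_le_mul_choose_succ {k s : ℕ} (h : s < k) :
    k.choose s ≤ k * k.choose (s + 1) :=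
  calc k.choose s ≤ k.choose s * (k - s) := Nat.le_mul_of_pos_right _ (by omega)
    _ = k.choose (s + 1) * (s + 1) := (Nat.choose_succ_right_eq k s).symm
    _ ≤ k * k.choose (s + 1) := by rw [mul_comm]; exact Nat.mul_le_mul_right _ h

section Algebra

variable {R : Type*} [CommRing R]

def binomHead (k i : ℕ) (w d : R) : R :=
  ∑ s ∈ range i, (k.choose s : R) * w ^ (k - s) * d ^ s

theorem binomHead_self (n : ℕ) (w d : R) : binomHead n (n + 1) w d = (w + d) ^ n := by
  rw [binomHead, add_comm w, add_pow]
  exact sum_congr rfl fun s _ => by ring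

theorem binomHead_succ (k i : ℕ) (w d : R) :
    binomHead k (i + 1) w d = binomHead k i w d + k.choose i * w ^ (k - i) * d ^ i :=
  sum_range_succ _ _

theorem binomHead_succ_add {n k : ℕ} (h : n ≤ k) (w d : R) :
    binomHead (k + 1) (n + 1) w d + k.choose n * w ^ (k - n) * d ^ (n + 1)
      = (w + d) * binomHead k (n + 1) w d := by
  induction n with
  | zero =>
    simp only [binomHead, zero_add, sum_range_one, Nat.choose_zero_right, Nat.cast_one, Nat.sub_zero]
    ring
  | succ n ih =>
    have hw : w ^ (k - n) = w * w ^ (k - (n + 1)) := by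
      rw [← pow_succ', show k - (n + 1) + 1 = k - n by omega]
    rw [binomHead_succ, binomHead_succ k (n + 1), Nat.choose_succ_succ, Nat.add_sub_add_right,
      Nat.cast_add]
    linear_combination ih (by omega) + (k.choose (n + 1) : R) * d ^ (n + 1) * hw

theorem pow_eq_sum_mul_pow_sub_add_binomHead (x w : R) {n k : ℕ} (h : n ≤ k) :
    x ^ k = (∑ t ∈ Icc (n + 1) k, (t - 1).choose n * w ^ (t - (n + 1)) * x ^ (k - t))
        * (x - w) ^ (n + 1) + binomHead k (n + 1) w (x - w) := by
  induction k, h using Nat.le_induction with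
  | base => simp [binomHead_self]
  | succ k hnk ih =>
    have htail :
        ∑ t ∈ Icc (n + 1) (k + 1), ((t - 1).choose n : R) * w ^ (t - (n + 1)) * x ^ (k + 1 - t)
          = x * ∑ t ∈ Icc (n + 1) k, ((t - 1).choose n : R) * w ^ (t - (n + 1)) * x ^ (k - t)
            + k.choose n * w ^ (k - n) := by
      rw [sum_Icc_succ_top (by omega), mul_sum, Nat.add_sub_cancel, Nat.sub_self, pow_zero,
        mul_one, Nat.add_sub_add_right]
      congr 1
      refine sum_congr rfl fun t ht => ?_
      rw [show k + 1 - t = k - t + 1 by have := (mem_Icc.mp ht).2; omega, pow_succ]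
      ring
    have hhead := binomHead_succ_add hnk w (x - w)
    rw [add_sub_cancel] at hhead
    rw [htail, pow_succ]
    linear_combination x * ih - hhead

end Algebra

section Field

variable {K : Type*} [Field K]

theorem one_div_sub_pow_eq {x w : K} (hx : x ≠ 0) (hxw : x - w ≠ 0) {i k : ℕ} (hi : 1 ≤ i)
    (hik : i ≤ k + 1) :
    1 / (x - w) ^ i = ∑ t ∈ Icc i k, (t - 1).choose (i - 1) * w ^ (t - i) / x ^ t
      + binomHead k i w (x - w) / (x ^ k * (x - w) ^ i) := by
  obtain ⟨n, rfl⟩ : ∃ n, i = n + 1 := ⟨i - 1, by omega⟩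
  have hsum : ∑ t ∈ Icc (n + 1) k, ((t - 1).choose n : K) * w ^ (t - (n + 1)) / x ^ t
      = (∑ t ∈ Icc (n + 1) k, (t - 1).choose n * w ^ (t - (n + 1)) * x ^ (k - t)) / x ^ k := by
    rw [sum_div]
    refine sum_congr rfl fun t ht => ?_
    rw [div_eq_div_iff (pow_ne_zero _ hx) (pow_ne_zero _ hx),
      ← pow_sub_mul_pow x (mem_Icc.mp ht).2]
    ring
  rw [Nat.add_sub_cancel, hsum]
  field_simp
  linear_combination pow_eq_sum_mul_pow_sub_add_binomHead x w (show n ≤ k by omega)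

def shiftCoeff (a : ℕ → K) (w : K) (t : ℕ) : K :=
  if t = 0 then a 0 else ∑ i ∈ Icc 1 t, ((t - 1).choose (i - 1) : K) * w ^ (-(i : ℤ)) * a i

theorem sum_pow_mul_shiftCoeff_div_pow (a : ℕ → K) {w : K} (hw : w ≠ 0) (x : K) (k : ℕ) :
    ∑ t ∈ range (k + 1), w ^ t * shiftCoeff a w t / x ^ t
      = a 0 + ∑ i ∈ Icc 1 k,
          a i * ∑ t ∈ Icc i k, (t - 1).choose (i - 1) * w ^ (t - i) / x ^ t := by
  rw [sum_range_succ_eq_add_sum_Icc]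
  simp only [shiftCoeff, if_pos, pow_zero, one_mul, div_one]
  congr 1
  calc _ = ∑ t ∈ Icc 1 k, ∑ i ∈ Icc 1 t,
        a i * ((t - 1).choose (i - 1) * w ^ (t - i) / x ^ t) := by
        refine sum_congr rfl fun t ht => ?_
        rw [if_neg (by have := (mem_Icc.mp ht).1; omega), mul_sum, sum_div]
        refine sum_congr rfl fun i hi => ?_
        rw [zpow_neg, zpow_natCast, pow_sub₀ w hw (mem_Icc.mp hi).2]
        ring
    _ = _ := by
        simp_rw [mul_sum]
        exact sum_comm' fun t i => by simp only [mem_Icc]; omega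

theorem sub_sum_shiftCoeff_eq (a : ℕ → K) (A : K) {x w : K} (hx : x ≠ 0) (hw : w ≠ 0)
    (hxw : x - w ≠ 0) (k : ℕ) :
    A - ∑ t ∈ range (k + 1), w ^ t * shiftCoeff a w t / x ^ t
      = (A - ∑ i ∈ range (k + 1), a i / (x - w) ^ i)
        + ∑ i ∈ Icc 1 k, a i * (binomHead k i w (x - w) / (x ^ k * (x - w) ^ i)) := by
  have hsplit : ∀ i ∈ Icc 1 k, a i / (x - w) ^ i
      = a i * ∑ t ∈ Icc i k, (t - 1).choose (i - 1) * w ^ (t - i) / x ^ t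
        + a i * (binomHead k i w (x - w) / (x ^ k * (x - w) ^ i)) := fun i hi => by
    obtain ⟨hi1, hik⟩ := mem_Icc.mp hi
    rw [div_eq_mul_one_div, one_div_sub_pow_eq (k := k) hx hxw hi1 (by omega), mul_add]
  rw [sum_pow_mul_shiftCoeff_div_pow a hw, sum_range_succ_eq_add_sum_Icc, sum_congr rfl hsplit,
    sum_add_distrib, pow_zero, div_one]
  ring

end Field

section Ordered

variable {K : Type*} [Field K] [LinearOrder K] [IsStrictOrderedRing K]

theorem sum_range_le_div_one_sub {f : ℕ → K} {q : K} (hq0 : 0 ≤ q) (hq1 : q < 1) (hf0 : 0 ≤ f 0)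
    {n : ℕ} (hf : ∀ s < n, f s ≤ q * f (s + 1)) : ∑ s ∈ range (n + 1), f s ≤ f n / (1 - q) := by
  have h1q : 0 < 1 - q := sub_pos.mpr hq1
  induction n with
  | zero => rw [sum_range_one, le_div_iff₀ h1q]; nlinarith
  | succ n ih =>
    rw [sum_range_succ]
    calc _ ≤ f n / (1 - q) + f (n + 1) := by gcongr; exact ih fun s hs => hf s (by omega)
      _ ≤ q * f (n + 1) / (1 - q) + f (n + 1) := by gcongr; exact hf n (by omega)
      _ = f (n + 1) / (1 - q) := by field_simp; ring

theorem binomHead_le {w d q : K} (hw : 0 ≤ w) (hd : 0 ≤ d) (hq0 : 0 ≤ q) (hq1 : q < 1) {k n : ℕ}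
    (hn : n ≤ k) (hkw : k * w ≤ q * d) :
    binomHead k (n + 1) w d ≤ k.choose n * w ^ (k - n) * d ^ n / (1 - q) := by
  refine sum_range_le_div_one_sub hq0 hq1 (by positivity) fun s hs => ?_
  have hchoose : (k.choose s : K) ≤ k * k.choose (s + 1) := by
    exact_mod_cast Nat.choose_le_mul_choose_succ (by omega)
  have hws : w ^ (k - s) = w * w ^ (k - (s + 1)) := by
    rw [← pow_succ', show k - (s + 1) + 1 = k - s by omega]
  calc (k.choose s : K) * w ^ (k - s) * d ^ s
      ≤ k * k.choose (s + 1) * w ^ (k - s) * d ^ s := by gcongr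
    _ = k.choose (s + 1) * w ^ (k - (s + 1)) * d ^ s * (k * w) := by rw [hws]; ring
    _ ≤ k.choose (s + 1) * w ^ (k - (s + 1)) * d ^ s * (q * d) := by gcongr
    _ = q * (k.choose (s + 1) * w ^ (k - (s + 1)) * d ^ (s + 1)) := by ring

theorem mul_choose_le_of_div_factorial_le {u v : K} {i k : ℕ} (hi : 1 ≤ i) (hik : i ≤ k)
    (h : u / (i - 1)! ≤ v / (k - 1)!) : u * k.choose (i - 1) ≤ k * v / (k + 1 - i)! := by
  have hk : (k : K) * (k - 1)! = k ! := by exact_mod_cast Nat.mul_factorial_pred (by omega)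
  rw [Nat.cast_choose K (by omega : i - 1 ≤ k), show k - (i - 1) = k + 1 - i by omega]
  calc u * (k ! / ((i - 1)! * (k + 1 - i)!)) = u / (i - 1)! * (k ! / (k + 1 - i)!) := by ring
    _ ≤ v / (k - 1)! * (k ! / (k + 1 - i)!) := by gcongr
    _ = k * v / (k + 1 - i)! := by rw [← hk]; field_simp

theorem abs_mul_binomHead_div_le {c u v x w d : K} {i k : ℕ} (hi : 1 ≤ i) (hik : i ≤ k)
    (hw : 0 ≤ w) (hd : 0 < d) (hx : 0 < x) (hkw : 3 * k * w ≤ 2 * d) (hc : |c| ≤ u)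
    (huv : u / (i - 1)! ≤ v / (k - 1)!) :
    |c * (binomHead k i w d / (x ^ k * d ^ i))|
      ≤ 3 * k * v / (x ^ k * d) * (w ^ (k + 1 - i) / (k + 1 - i)!) := by
  obtain ⟨n, rfl⟩ : ∃ n, i = n + 1 := ⟨i - 1, by omega⟩
  have hhead := binomHead_le hw hd.le (q := 2 / 3) (by norm_num) (by norm_num) (by omega : n ≤ k)
    (by linarith)
  have hfac := mul_choose_le_of_div_factorial_le hi hik huv
  rw [Nat.add_sub_cancel] at hfac
  have hR : 0 ≤ binomHead k (n + 1) w d / (x ^ k * d ^ (n + 1)) :=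
    div_nonneg (sum_nonneg fun s _ => by positivity) (by positivity)
  have hu : 0 ≤ u := (abs_nonneg c).trans hc
  calc |c * (binomHead k (n + 1) w d / (x ^ k * d ^ (n + 1)))|
      ≤ u * (binomHead k (n + 1) w d / (x ^ k * d ^ (n + 1))) := by
        rw [abs_mul, abs_of_nonneg hR]; gcongr
    _ ≤ u * (k.choose n * w ^ (k - n) * d ^ n / (1 - 2 / 3) / (x ^ k * d ^ (n + 1))) := by
        gcongr
    _ = 3 * (u * k.choose n) * w ^ (k + 1 - (n + 1)) / (x ^ k * d) := by
        rw [show k + 1 - (n + 1) = k - n by omega]; field_simp; ring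
    _ ≤ 3 * (k * v / (k + 1 - (n + 1))!) * w ^ (k + 1 - (n + 1)) / (x ^ k * d) := by gcongr
    _ = _ := by ring

end Ordered

theorem four_mul_sum_Icc_pow_div_factorial_le {w : ℝ} (hw : 0 ≤ w) {k : ℕ} (hk : 1 ≤ k) :
    4 * ∑ j ∈ Icc 1 k, w ^ j / j ! ≤ 3 * k * exp w := by
  obtain rfl | hk2 := hk.eq_or_lt
  · simp only [Icc_self, sum_singleton, pow_one, Nat.factorial_one, Nat.cast_one, div_one, mul_one]
    nlinarith [quadratic_le_exp_of_nonneg hw]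
  · have hsum := sum_le_exp_of_nonneg hw (k + 1)
    rw [sum_range_succ_eq_add_sum_Icc] at hsum
    have hk2' : (2 : ℝ) ≤ k := by exact_mod_cast hk2
    simp only [pow_zero, Nat.factorial_zero, Nat.cast_one, div_one] at hsum
    nlinarith [one_le_exp hw]

theorem add_pow_le_three_mul_pow {d w : ℝ} (hd : 0 < d) (hw : 0 ≤ w) {n : ℕ} (h : n * w ≤ d) :
    (d + w) ^ n ≤ 3 * d ^ n :=
  calc (d + w) ^ n = (1 + w / d) ^ n * d ^ n := by rw [← mul_pow]; field_simp
    _ ≤ exp (w / d) ^ n * d ^ n := by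
        gcongr
        linarith [add_one_le_exp (w / d)]
    _ ≤ 3 * d ^ n := by
        rw [← exp_nat_mul]
        gcongr
        calc exp (n * (w / d)) ≤ exp 1 := by
              rw [exp_le_exp, ← mul_div_assoc, div_le_one hd]; exact h
          _ ≤ 3 := exp_one_lt_three.le

theorem sum_Icc_reflect_pow_div_factorial (w : ℝ) (k : ℕ) :
    ∑ i ∈ Icc 1 k, w ^ (k + 1 - i) / (k + 1 - i)! = ∑ j ∈ Icc 1 k, w ^ j / j ! := by
  rw [← Ico_add_one_right_eq_Icc, sum_Ico_reflect (fun j => w ^ j / j !) 1 (Nat.le_succ (k + 1))]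
  congr 2
  omega

theorem abs_sum_mul_binomHead_div_le {a aT : ℕ → ℝ} {x w : ℝ} {k : ℕ} (hk : 1 ≤ k) (hw : 0 ≤ w)
    (hd : 0 < x - w) (hkw : 3 * k * w ≤ 2 * (x - w)) (hxd : 3 * x ≤ 4 * (x - w))
    (habs : ∀ i, |a i| ≤ aT i)
    (hmono : ∀ i, 1 ≤ i → i ≤ k → aT i / (i - 1)! ≤ aT k / (k - 1)!) :
    |∑ i ∈ Icc 1 k, a i * (binomHead k i w (x - w) / (x ^ k * (x - w) ^ i))|
      ≤ 3 * k ^ 2 * exp w * aT k / x ^ (k + 1) := by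
  set d := x - w
  have hx : 0 < x := by linarith
  have haT : 0 ≤ aT k := (abs_nonneg _).trans (habs k)
  have hexp := four_mul_sum_Icc_pow_div_factorial_le hw hk
  set S := ∑ j ∈ Icc 1 k, w ^ j / (j ! : ℝ)
  have hSx : S * x ≤ k * exp w * d := by
    nlinarith [mul_le_mul hexp hxd (by positivity) (by positivity)]
  calc _ ≤ ∑ i ∈ Icc 1 k, |a i * (binomHead k i w d / (x ^ k * d ^ i))| := abs_sum_le_sum_abs _ _
    _ ≤ ∑ i ∈ Icc 1 k, 3 * k * aT k / (x ^ k * d) * (w ^ (k + 1 - i) / (k + 1 - i)!) :=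
        sum_le_sum fun i hi => abs_mul_binomHead_div_le (mem_Icc.mp hi).1 (mem_Icc.mp hi).2 hw hd
          hx hkw (habs i) (hmono i (mem_Icc.mp hi).1 (mem_Icc.mp hi).2)
    _ = 3 * k * aT k / (x ^ k * d) * S := by rw [← mul_sum, sum_Icc_reflect_pow_div_factorial]
    _ ≤ 3 * k ^ 2 * exp w * aT k / x ^ (k + 1) := by
      rw [div_mul_eq_mul_div, div_le_div_iff₀ (by positivity) (by positivity), pow_succ]
      nlinarith [mul_le_mul_of_nonneg_left hSx (by positivity : (0 : ℝ) ≤ 3 * k * aT k * x ^ k)]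

theorem expansion_base_shift_general (a aTilde : ℕ → ℝ) (A Ck : ℝ) (g m k : ℕ)
    (hm : 0 < m) (hk : 0 < k)
    (h1 : m ≤ k + 1) (h2 : (k + 1 : ℝ) ≤ (g : ℝ) ^ ((1 : ℝ) / 3))
    (habs : ∀ i, |a i| ≤ aTilde i)
    (hmono : ∀ i j, 1 ≤ i → i ≤ j →
      aTilde i / Nat.factorial (i - 1) ≤ aTilde j / Nat.factorial (j - 1))
    (hexp : |A - ∑ i ∈ Finset.range (k + 1), a i / ((g : ℝ) - m) ^ i|
      ≤ Ck / ((g : ℝ) - m) ^ (k + 1)) :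
    |A - ∑ t ∈ Finset.range (k + 1), (m : ℝ) ^ t *
        (if t = 0 then a 0 else
          ∑ i ∈ Finset.Icc 1 t, (Nat.choose (t - 1) (i - 1) : ℝ) * (m : ℝ) ^ (-(i : ℤ)) * a i)
        / (g : ℝ) ^ t|
      ≤ (3 * Ck + 3 * (k : ℝ) ^ 2 * Real.exp m * aTilde k) / (g : ℝ) ^ (k + 1) := by
  have hmk : (m : ℝ) ≤ k + 1 := by exact_mod_cast h1
  have hk1 : (1 : ℝ) ≤ k := by exact_mod_cast hk
  have hcube : ((k : ℝ) + 1) ^ 3 ≤ (g : ℝ) :=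
    calc ((k : ℝ) + 1) ^ 3 ≤ ((g : ℝ) ^ ((1 : ℝ) / 3)) ^ 3 := by gcongr
      _ = (g : ℝ) := by rw [← Real.rpow_natCast, ← Real.rpow_mul g.cast_nonneg]; norm_num
  have hgk : ((k : ℝ) + 1) * (2 * k + 2) ≤ g := by nlinarith
  have hg : (0 : ℝ) < g := by nlinarith
  have hd : 0 < (g : ℝ) - m := by nlinarith
  have hpow : (g : ℝ) ^ (k + 1) ≤ 3 * ((g : ℝ) - m) ^ (k + 1) := by
    simpa using add_pow_le_three_mul_pow hd m.cast_nonneg (n := k + 1) (by push_cast; nlinarith)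
  have hCk : 0 ≤ Ck := by
    by_contra! hneg
    linarith [(abs_nonneg _).trans hexp, div_neg_of_neg_of_pos hneg (pow_pos hd (k + 1))]
  change |A - ∑ t ∈ range (k + 1), (m : ℝ) ^ t * shiftCoeff a m t / (g : ℝ) ^ t| ≤ _
  rw [sub_sum_shiftCoeff_eq a A hg.ne' (by exact_mod_cast hm.ne') hd.ne', add_div]
  refine (abs_add_le _ _).trans (add_le_add (hexp.trans ?_) ?_)
  · rw [div_le_div_iff₀ (pow_pos hd _) (pow_pos hg _)]
    nlinarith [mul_le_mul_of_nonneg_left hpow hCk]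
  · exact abs_sum_mul_binomHead_div_le hk m.cast_nonneg hd (by nlinarith) (by nlinarith) habs
      fun i hi hik => hmono i k hi hik

/-- Shifting an asymptotic expansion in `1/(g−m)` to one in `1/g`. -/
theorem expansion_base_shift (a aTilde : ℕ → ℝ) (A Ck : ℝ) (g m k : ℕ)
    (hm : 0 < m) (hk : 0 < k) (hg : 0 < g)
    (h1 : m ≤ k + 1) (h2 : (k + 1 : ℝ) ≤ (g : ℝ) ^ ((1 : ℝ) / 3))
    (habs : ∀ i, |a i| ≤ aTilde i)
    (hmono : ∀ i j, 1 ≤ i → i ≤ j →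
      aTilde i / Nat.factorial (i - 1) ≤ aTilde j / Nat.factorial (j - 1))
    (hexp : |A - ∑ i ∈ Finset.range (k + 1), a i / ((g : ℝ) - m) ^ i|
      ≤ Ck / ((g : ℝ) - m) ^ (k + 1)) :
    |A - ∑ t ∈ Finset.range (k + 1), (m : ℝ) ^ t *
        (if t = 0 then a 0 else
          ∑ i ∈ Finset.Icc 1 t, (Nat.choose (t - 1) (i - 1) : ℝ) * (m : ℝ) ^ (-(i : ℤ)) * a i)
        / (g : ℝ) ^ t|
      ≤ (3 * Ck + 3 * (k : ℝ) ^ 2 * Real.exp m * aTilde k) / (g : ℝ) ^ (k + 1) :=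
  expansion_base_shift_general a aTilde A Ck g m k hm hk h1 h2 habs hmono hexp
end

section
/- Let t₁, …, t_k be positive integers and b, c real numbers with b, c > 1. Then ∏_{q=1}^{k} (∑_{p=1}^{t_q} C(t_q−1, p−1)·b^{t_q−p}·(c·t_q)^{c·p}) ≤ (c·(t₁+…+t_k) + b)^{c·(t₁+…+t_k)}. -/
lemma choose_pred_le (n p : ℕ) (hn : 1 ≤ n) (hp : 1 ≤ p) :
    (n - 1).choose (p - 1) ≤ n.choose p := by
  obtain ⟨n', rfl⟩ : ∃ n', n = n' + 1 := ⟨n - 1, by omega⟩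
  obtain ⟨p', rfl⟩ : ∃ p', p = p' + 1 := ⟨p - 1, by omega⟩
  simp only [Nat.add_sub_cancel, Nat.choose_succ_succ]
  exact Nat.le_add_right _ _

/-- For positive integers `t₁,…,t_k`, real `b > 1` and integer `c ≥ 2`:
`∏_q ∑_{p=1}^{t_q} C(t_q−1, p−1)·b^{t_q−p}·(c·t_q)^{c·p} ≤ (c·(t₁+…+t_k)+b)^{c·(t₁+…+t_k)}`. -/
theorem prod_sum_choose_bound (k : ℕ) (t : Fin k → ℕ) (ht : ∀ q, 1 ≤ t q)
    (b : ℝ) (hb : 1 < b) (c : ℕ) (hc : 2 ≤ c) :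
    ∏ q, (∑ p ∈ Finset.Icc 1 (t q),
        (Nat.choose (t q - 1) (p - 1) : ℝ) * b ^ (t q - p) * ((c : ℝ) * (t q : ℝ)) ^ (c * p))
      ≤ ((c : ℝ) * (∑ q, (t q : ℝ)) + b) ^ (c * ∑ q, t q) := by
  set S : ℕ := ∑ q, t q with hS
  have hcastS : (∑ q, (t q : ℝ)) = (S : ℝ) := by rw [hS]; push_cast; ring
  have hb0 : (0:ℝ) < b := lt_trans one_pos hb
  set M : ℝ := (c:ℝ) * S + b with hM
  have hM0 : (0:ℝ) ≤ M := by positivity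
  have key : ∀ q, (∑ p ∈ Finset.Icc 1 (t q),
        (Nat.choose (t q - 1) (p - 1) : ℝ) * b ^ (t q - p) * ((c : ℝ) * (t q : ℝ)) ^ (c * p))
      ≤ (M ^ c) ^ (t q) := by
    intro q
    set n := t q with hn
    have hn1 : 1 ≤ n := ht q
    have hnS : n ≤ S := by
      rw [hS, hn]
      exact Finset.single_le_sum (f := fun q => t q) (fun i _ => Nat.zero_le _)
        (Finset.mem_univ q)
    set Y : ℝ := ((c:ℝ) * n) ^ c with hY
    have hY0 : (0:ℝ) ≤ Y := by positivity
    have step1 : (∑ p ∈ Finset.Icc 1 n,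
        (Nat.choose (n-1) (p-1) : ℝ) * b ^ (n - p) * ((c:ℝ) * n) ^ (c * p))
        ≤ ∑ p ∈ Finset.range (n+1), Y ^ p * b ^ (n - p) * (n.choose p) := by
      have hsub : Finset.Icc 1 n ⊆ Finset.range (n+1) := by
        intro p hp
        simp only [Finset.mem_Icc] at hp
        simp only [Finset.mem_range]; omega
      refine le_trans (Finset.sum_le_sum ?_) (Finset.sum_le_sum_of_subset_of_nonneg hsub ?_)
      · intro p hp
        simp only [Finset.mem_Icc] at hp
        have hch : (n-1).choose (p-1) ≤ n.choose p :=
          choose_pred_le n p hn1 hp.1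
        have hYe : ((c:ℝ) * n) ^ (c * p) = Y ^ p := by
          rw [hY, ← pow_mul]
        rw [hYe]
        have hb' : (0:ℝ) ≤ b ^ (n - p) := by positivity
        have hYp : (0:ℝ) ≤ Y ^ p := by positivity
        calc (Nat.choose (n-1) (p-1) : ℝ) * b ^ (n - p) * Y ^ p
            ≤ (Nat.choose n p : ℝ) * b ^ (n - p) * Y ^ p :=
              mul_le_mul_of_nonneg_right
                (mul_le_mul_of_nonneg_right (by exact_mod_cast hch) hb') hYp
          _ = Y ^ p * b ^ (n - p) * (n.choose p) := by ring
      · intro p _ _; positivity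
    have step2 : ∑ p ∈ Finset.range (n+1), Y ^ p * b ^ (n - p) * (n.choose p)
        = (Y + b) ^ n := (add_pow Y b n).symm
    have hYb : Y + b ≤ M ^ c := by
      have h1 : Y ≤ ((c:ℝ) * S) ^ c := by
        rw [hY]
        apply pow_le_pow_left₀ (by positivity)
        have : (n:ℝ) ≤ (S:ℝ) := by exact_mod_cast hnS
        nlinarith [Nat.cast_nonneg (α := ℝ) c]
      have h2 : b ≤ b ^ c := le_self_pow₀ hb.le (by omega)
      have h3 : ((c:ℝ) * S) ^ c + b ^ c ≤ M ^ c := by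
        rw [hM]
        exact pow_add_pow_le (by positivity) hb0.le (by omega)
      linarith
    calc (∑ p ∈ Finset.Icc 1 n,
        (Nat.choose (n-1) (p-1) : ℝ) * b ^ (n - p) * ((c:ℝ) * n) ^ (c * p))
        ≤ (Y + b) ^ n := step2 ▸ step1
      _ ≤ (M ^ c) ^ n := pow_le_pow_left₀ (by positivity) hYb n
  calc ∏ q, (∑ p ∈ Finset.Icc 1 (t q),
        (Nat.choose (t q - 1) (p - 1) : ℝ) * b ^ (t q - p) * ((c : ℝ) * (t q : ℝ)) ^ (c * p))
      ≤ ∏ q, (M ^ c) ^ (t q) := by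
        apply Finset.prod_le_prod
        · intro q _
          apply Finset.sum_nonneg
          intro p _
          positivity
        · intro q _
          exact key q
    _ = (M ^ c) ^ S := by rw [Finset.prod_pow_eq_pow_sum]
    _ = ((c : ℝ) * (∑ q, (t q : ℝ)) + b) ^ (c * S) := by
        rw [← pow_mul, hcastS]
end
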